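/- Let 0 ≤ γ₁ ≤ γ₂ ≤ 1 and ξ ∈ [0, 1]. Then H₂((1-γ₂)·ξ) - H₂(γ₂·ξ) ≤ H₂((1-γ₁)·ξ) - H₂(γ₁·ξ); that is, for each fixed input parameter ξ the coherent-information integrand of the amplitude damping channel is a nonincreasing function of the damping parameter γ. -/

import Mathlib

/-!
Write `H₂(γξ) = H₂(1 - γξ)`. Then both sides are of the form `H₂(p) - H₂(q)` with
`p = (1 - γ)ξ ≤ q = 1 - γξ`, and passing from `γ₂` to `γ₁` shifts `p` and `q` up by the same
amount `(γ₂ - γ₁)ξ`. For a concave function the increment over an interval of fixed length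
decreases as the interval moves right, so `H₂(p)` gains at least as much as `H₂(q)`.
-/

/-- The binary entropy `H₂(x) = -x·log₂ x - (1-x)·log₂(1-x)` (with the conventions
`H₂(0) = H₂(1) = 0`, automatic since `Real.logb 2 0 = 0`). -/
noncomputable def binEnt (x : ℝ) : ℝ :=
  -(x * Real.logb 2 x) - (1 - x) * Real.logb 2 (1 - x)

open Set

theorem ConcaveOn.map_add_sub_map_le_of_le {𝕜 : Type*} [Field 𝕜] [LinearOrder 𝕜]
    [IsStrictOrderedRing 𝕜] {s : Set 𝕜} {f : 𝕜 → 𝕜} (hf : ConcaveOn 𝕜 s f) {x y d : 𝕜}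
    (hx : x ∈ s) (hyd : y + d ∈ s) (hxy : x ≤ y) (hd : 0 ≤ d) :
    f (y + d) - f y ≤ f (x + d) - f x := by
  rcases hxy.eq_or_lt with rfl | hxy
  · rfl
  -- `x + d` and `y` are the convex combinations of `x` and `y + d` with swapped weights.
  have hL : 0 < y + d - x := by linarith
  set a := (y - x) / (y + d - x)
  set b := d / (y + d - x)
  have ha : 0 ≤ a := div_nonneg (by linarith) hL.le
  have hb : 0 ≤ b := div_nonneg hd hL.le
  have hab : a + b = 1 := by
    rw [← add_div, div_eq_one_iff_eq hL.ne']
    ring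
  have hxd : a • x + b • (y + d) = x + d := by simp only [smul_eq_mul, a, b]; field_simp; ring
  have hy : b • x + a • (y + d) = y := by simp only [smul_eq_mul, a, b]; field_simp; ring
  have h₁ := hf.2 hx hyd ha hb hab
  have h₂ := hf.2 hx hyd hb ha (by rw [add_comm, hab])
  rw [hxd] at h₁
  rw [hy] at h₂
  simp only [smul_eq_mul] at h₁ h₂
  linear_combination h₁ + h₂ - (f x + f (y + d)) * hab

lemma binEnt_eq_binEntropy_div (x : ℝ) : binEnt x = Real.binEntropy x / Real.log 2 := by
  simp only [binEnt, Real.binEntropy, Real.logb, Real.log_inv]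
  ring

lemma binEnt_one_sub (x : ℝ) : binEnt (1 - x) = binEnt x := by
  simp only [binEnt_eq_binEntropy_div, Real.binEntropy_one_sub]

lemma concaveOn_binEnt : ConcaveOn ℝ (Icc 0 1) binEnt := by
  have h : binEnt = fun x ↦ (Real.log 2)⁻¹ • Real.binEntropy x := by
    ext x
    rw [binEnt_eq_binEntropy_div, smul_eq_mul, inv_mul_eq_div]
  rw [h]
  exact Real.strictConcave_binEntropy.concaveOn.smul (inv_nonneg.2 (Real.log_nonneg one_le_two))

/-- For `0 ≤ γ₁ ≤ γ₂ ≤ 1` and `ξ ∈ [0,1]`,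
`H₂((1-γ₂)ξ) - H₂(γ₂ξ) ≤ H₂((1-γ₁)ξ) - H₂(γ₁ξ)`: for fixed `ξ` the coherent-information
integrand of the amplitude damping channel is nonincreasing in the damping parameter `γ`. -/
theorem ad_coherent_info_antitone_in_gamma (γ₁ γ₂ ξ : ℝ)
    (h0 : 0 ≤ γ₁) (h12 : γ₁ ≤ γ₂) (h1 : γ₂ ≤ 1) (hξ : ξ ∈ Set.Icc (0 : ℝ) 1) :
    binEnt ((1 - γ₂) * ξ) - binEnt (γ₂ * ξ) ≤ binEnt ((1 - γ₁) * ξ) - binEnt (γ₁ * ξ) := by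
  obtain ⟨hξ0, hξ1⟩ := hξ
  have h := concaveOn_binEnt.map_add_sub_map_le_of_le (x := (1 - γ₂) * ξ) (y := 1 - γ₂ * ξ)
    (d := (γ₂ - γ₁) * ξ) ⟨by nlinarith, by nlinarith⟩ ⟨by nlinarith, by nlinarith⟩ (by nlinarith)
    (by nlinarith)
  rw [show 1 - γ₂ * ξ + (γ₂ - γ₁) * ξ = 1 - γ₁ * ξ by ring,
    show (1 - γ₂) * ξ + (γ₂ - γ₁) * ξ = (1 - γ₁) * ξ by ring, binEnt_one_sub, binEnt_one_sub] at h
  linarith
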